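/- With X, T, and the metric d as in the standing construction, the metric completion (T̄, d) of (T, d) is locally connected. -/

import Mathlib

/-- `A` is an arc in `X` joining `x` and `y`: the image of a continuous injection
from `[0,1]` sending `0` to `x` and `1` to `y`. -/
def IsArcBetween {X : Type*} [TopologicalSpace X] (A : Set X) (x y : X) : Prop :=
  ∃ f : unitInterval → X, Continuous f ∧ Function.Injective f ∧
    f 0 = x ∧ f 1 = y ∧ Set.range f = A

/-- `A` is an arc in `X` (a subspace homeomorphic to `[0,1]`). -/
def IsArc {X : Type*} [TopologicalSpace X] (A : Set X) : Prop :=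
  ∃ x y, IsArcBetween A x y

/-- `X` is uniquely arcwise connected: any two distinct points are joined by a unique arc. -/
def UniquelyArcwiseConnected (X : Type*) [TopologicalSpace X] : Prop :=
  ∀ x y : X, x ≠ y → ∃! A : Set X, IsArcBetween A x y

/-- A dendrite: a (metrizable) continuum which is locally connected and uniquely
arcwise connected. -/
def IsDendrite (X : Type*) [TopologicalSpace X] : Prop :=
  Nonempty X ∧ CompactSpace X ∧ ConnectedSpace X ∧
    TopologicalSpace.MetrizableSpace X ∧ LocallyConnectedSpace X ∧
    UniquelyArcwiseConnected X

/-- A subset `Y` of `X` is a tree: it is a dendrite (with the subspace topology)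
which is the union of finitely many arcs. -/
def IsTree {X : Type*} [TopologicalSpace X] (Y : Set X) : Prop :=
  IsDendrite Y ∧ ∃ (n : ℕ) (A : Fin n → Set X), (∀ i, IsArc (A i)) ∧ Y = ⋃ i, A i

/-- The arc `[x, y]` in a uniquely arcwise connected space (`{x}` if `x = y`). -/
noncomputable def arcOf {X : Type*} [TopologicalSpace X]
    (hX : UniquelyArcwiseConnected X) (x y : X) : Set X :=
  letI : Decidable (x = y) := Classical.dec _
  if h : x = y then {x} else (hX x y h).choose

/-- The standing construction: in a uniquely arcwise connected continuum `X`, a strictly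
increasing sequence of trees `T n = I 0 ∪ ... ∪ I n` built from arcs `I i` meeting
pairwise in at most a point, together with homeomorphisms `h i : I i → [0,1]`. -/
structure StandingConstruction (X : Type*) [MetricSpace X] where
  /-- `X` is uniquely arcwise connected. -/
  huac : UniquelyArcwiseConnected X
  /-- the arcs `I i` -/
  I : ℕ → Set X
  arc_I : ∀ i, IsArc (I i)
  /-- distinct arcs meet in at most one point -/
  inter_I : ∀ i j, i ≠ j → (I i ∩ I j).Subsingleton
  /-- each partial union `T n = ⋃_{i ≤ n} I i` is a tree -/
  tree_T : ∀ n : ℕ, IsTree (⋃ i ≤ n, I i)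
  /-- the sequence of trees is strictly increasing -/
  strict_T : ∀ n : ℕ, (⋃ i ≤ n, I i) ⊂ ⋃ i ≤ n + 1, I i
  /-- the homeomorphisms `h i : I i → [0,1]` -/
  h : ℕ → X → ℝ
  h_cont : ∀ i, ContinuousOn (h i) (I i)
  h_inj : ∀ i, Set.InjOn (h i) (I i)
  h_image : ∀ i, h i '' I i = Set.Icc (0 : ℝ) 1

/-- The tree `T n` of the standing construction. -/
def StandingConstruction.Tn {X : Type*} [MetricSpace X]
    (sc : StandingConstruction X) (n : ℕ) : Set X :=
  ⋃ i ≤ n, sc.I i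

/-- The set `T = ⋃ n T n` of the standing construction. -/
def StandingConstruction.T {X : Type*} [MetricSpace X]
    (sc : StandingConstruction X) : Set X :=
  ⋃ i, sc.I i

/-- The metric `d(x,y) = ∑ i 2^{-(i+1)} l(h i ([x,y] ∩ I i))` of the standing
construction, where `l` is the length (diameter) of a subinterval of `[0,1]`. -/
noncomputable def StandingConstruction.d {X : Type*} [MetricSpace X]
    (sc : StandingConstruction X) (x y : X) : ℝ :=
  ∑' i : ℕ, (2 : ℝ)⁻¹ ^ (i + 1) *
    Metric.diam (sc.h i '' (arcOf sc.huac x y ∩ sc.I i))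


/-!
For `x ∈ T` the arc `[x, z]` is a subarc of `[x, y]` whenever `z ∈ [x, y]`, so it meets every
`I i` in less and `d x z ≤ d x y`; hence the trace on `T` of a `d`-ball centred at a point of `T`
is the union of the arcs `[x, y]` it contains. Each such arc is a `d`-continuous path: along a
parametrisation `f`, the `i`-th summand of `d (f t) (f t₀)` tends to `0` because `h i ∘ f` is
continuous on the closed set `f ⁻¹' I i`, and the summands are dominated by `2⁻¹ ^ (i + 1)`.
So these traces are connected, and since `T` is dense their closures are connected
neighbourhoods in the completion.
-/

open Set Filter Topology Metric Function

theorem ContinuousOn.exists_pos_forall_dist_lt_of_isClosed {α β : Type*} [PseudoMetricSpace α]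
    [PseudoMetricSpace β] {g : α → β} {K : Set α} (hg : ContinuousOn g K) (hK : IsClosed K)
    (x : α) {ε : ℝ} (hε : 0 < ε) :
    ∃ δ > 0, ∀ u ∈ K, ∀ v ∈ K, dist u x < δ → dist v x < δ → dist (g u) (g v) < ε := by
  by_cases hx : x ∈ K
  · obtain ⟨δ, hδ, H⟩ := Metric.continuousWithinAt_iff.mp (hg x hx) (ε / 2) (half_pos hε)
    refine ⟨δ, hδ, fun u hu v hv hux hvx => ?_⟩
    calc dist (g u) (g v) ≤ dist (g u) (g x) + dist (g v) (g x) := dist_triangle_right _ _ _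
      _ < ε := by linarith [H hu hux, H hv hvx]
  · obtain ⟨δ, hδ, hball⟩ := Metric.isOpen_iff.mp hK.isOpen_compl x hx
    exact ⟨δ, hδ, fun u hu _ _ hux _ => absurd hu (hball hux)⟩

theorem unitInterval.dist_le_of_mem_uIcc {s t u : unitInterval} (hu : u ∈ uIcc t s) :
    dist u s ≤ dist t s :=
  Real.dist_right_le_of_mem_uIcc (by simpa [mem_uIcc, ← Subtype.coe_le_coe] using hu)

theorem tendsto_diam_image_uIcc_inter {g : unitInterval → ℝ} {K : Set unitInterval}
    (hg : ContinuousOn g K) (hK : IsClosed K) (t₀ : unitInterval) :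
    Tendsto (fun t => diam (g '' (uIcc t t₀ ∩ K))) (𝓝 t₀) (𝓝 0) := by
  rw [Metric.tendsto_nhds]
  intro ε hε
  obtain ⟨δ, hδ, H⟩ := hg.exists_pos_forall_dist_lt_of_isClosed hK t₀ (half_pos hε)
  filter_upwards [ball_mem_nhds t₀ hδ] with t ht
  have hdiam : diam (g '' (uIcc t t₀ ∩ K)) ≤ ε / 2 := by
    refine diam_le_of_forall_dist_le (half_pos hε).le ?_
    rintro _ ⟨u, ⟨hu, huK⟩, rfl⟩ _ ⟨v, ⟨hv, hvK⟩, rfl⟩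
    exact (H u huK v hvK ((unitInterval.dist_le_of_mem_uIcc hu).trans_lt ht)
      ((unitInterval.dist_le_of_mem_uIcc hv).trans_lt ht)).le
  rw [Real.dist_0_eq_abs, abs_of_nonneg diam_nonneg]
  linarith

theorem summable_geometric_two_inv_succ : Summable (fun i : ℕ => (2 : ℝ)⁻¹ ^ (i + 1)) :=
  (summable_nat_add_iff 1).mpr (summable_geometric_of_lt_one (by norm_num) (by norm_num))

theorem unitInterval.isArcBetween_Icc {s t : unitInterval} (hst : s < t) :
    IsArcBetween (Icc s t) s t := by
  have hsub : Icc (s : ℝ) t ⊆ Icc 0 1 := Icc_subset_Icc s.2.1 t.2.2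
  let e := iccHomeoI (s : ℝ) t hst
  refine ⟨inclusion hsub ∘ e.symm, (continuous_inclusion hsub).comp e.symm.continuous,
    (inclusion_injective hsub).comp e.symm.injective, ?_, ?_, ?_⟩
  · ext; simp [e]
  · ext; simp [e]
  · rw [e.symm.surjective.range_comp, range_inclusion]
    ext u
    simp [← Subtype.coe_le_coe]

section UniquelyArcwiseConnected

variable {X : Type*} [TopologicalSpace X]

theorem IsArcBetween.symm {A : Set X} {x y : X} (h : IsArcBetween A x y) :
    IsArcBetween A y x := by
  obtain ⟨f, hc, hi, rfl, rfl, rfl⟩ := h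
  exact ⟨f ∘ unitInterval.symm, hc.comp unitInterval.continuous_symm,
    hi.comp unitInterval.symm_involutive.injective, by simp, by simp,
    unitInterval.symm_involutive.surjective.range_comp f⟩

theorem IsArcBetween.image {Z : Type*} [TopologicalSpace Z] {A : Set X} {x y : X}
    (h : IsArcBetween A x y) {g : X → Z} (hg : Continuous g) (hinj : Injective g) :
    IsArcBetween (g '' A) (g x) (g y) := by
  obtain ⟨f, hc, hi, rfl, rfl, rfl⟩ := h
  exact ⟨g ∘ f, hg.comp hc, hinj.comp hi, rfl, rfl, range_comp g f⟩

variable (hX : UniquelyArcwiseConnected X)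

theorem arcOf_self (x : X) : arcOf hX x x = {x} := by
  simp [arcOf]

theorem isArcBetween_arcOf {x y : X} (h : x ≠ y) : IsArcBetween (arcOf hX x y) x y := by
  simpa [arcOf, h] using (hX x y h).choose_spec.1

theorem arcOf_eq_of_isArcBetween {A : Set X} {x y : X} (h : x ≠ y) (hA : IsArcBetween A x y) :
    arcOf hX x y = A := by
  simpa [arcOf, h] using ((hX x y h).choose_spec.2 A hA).symm

theorem arcOf_comm (x y : X) : arcOf hX x y = arcOf hX y x := by
  rcases eq_or_ne x y with rfl | h
  · rfl
  · exact arcOf_eq_of_isArcBetween hX h (isArcBetween_arcOf hX h.symm).symm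

theorem left_mem_arcOf (x y : X) : x ∈ arcOf hX x y := by
  rcases eq_or_ne x y with rfl | h
  · simp [arcOf_self]
  · obtain ⟨f, -, -, h0, -, hr⟩ := isArcBetween_arcOf hX h
    exact hr ▸ h0 ▸ mem_range_self 0

theorem right_mem_arcOf (x y : X) : y ∈ arcOf hX x y :=
  arcOf_comm hX x y ▸ left_mem_arcOf hX y x

theorem arcOf_eq_image_Icc {f : unitInterval → X} (hc : Continuous f) (hi : Injective f)
    {s t : unitInterval} (hst : s ≤ t) : arcOf hX (f s) (f t) = f '' Icc s t := by
  rcases hst.eq_or_lt with rfl | hst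
  · simp [arcOf_self]
  · exact arcOf_eq_of_isArcBetween hX (hi.ne hst.ne)
      ((unitInterval.isArcBetween_Icc hst).image hc hi)

theorem arcOf_eq_image_uIcc {f : unitInterval → X} (hc : Continuous f) (hi : Injective f)
    (s t : unitInterval) : arcOf hX (f s) (f t) = f '' uIcc s t := by
  rcases le_total s t with h | h
  · rw [uIcc_of_le h, arcOf_eq_image_Icc hX hc hi h]
  · rw [uIcc_of_ge h, arcOf_comm, arcOf_eq_image_Icc hX hc hi h]

theorem arcOf_subset_arcOf {x y z : X} (hz : z ∈ arcOf hX x y) :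
    arcOf hX x z ⊆ arcOf hX x y := by
  rcases eq_or_ne x y with rfl | hxy
  · rw [arcOf_self] at hz ⊢
    rw [mem_singleton_iff.mp hz, arcOf_self]
  · obtain ⟨f, hc, hi, rfl, rfl, hr⟩ := isArcBetween_arcOf hX hxy
    obtain ⟨u, rfl⟩ := hr ▸ hz
    rw [arcOf_eq_image_uIcc hX hc hi, ← hr]
    exact image_subset_range _ _

end UniquelyArcwiseConnected

namespace StandingConstruction

variable {X : Type*} [MetricSpace X] (sc : StandingConstruction X)

theorem arcOf_subset_T {a b : X} (ha : a ∈ sc.T) (hb : b ∈ sc.T) : arcOf sc.huac a b ⊆ sc.T := by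
  rcases eq_or_ne a b with rfl | hab
  · simpa [arcOf_self] using ha
  obtain ⟨i, hi⟩ := mem_iUnion.mp ha
  obtain ⟨j, hj⟩ := mem_iUnion.mp hb
  have haS : a ∈ sc.Tn (max i j) := mem_iUnion₂.mpr ⟨i, le_max_left _ _, hi⟩
  have hbS : b ∈ sc.Tn (max i j) := mem_iUnion₂.mpr ⟨j, le_max_right _ _, hj⟩
  obtain ⟨A, hA, -⟩ := (sc.tree_T (max i j)).1.2.2.2.2.2 ⟨a, haS⟩ ⟨b, hbS⟩ (Subtype.coe_ne_coe.mp hab)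
  rw [arcOf_eq_of_isArcBetween sc.huac hab (hA.image continuous_subtype_val Subtype.val_injective)]
  rintro _ ⟨⟨z, hz⟩, -, rfl⟩
  obtain ⟨k, -, hk⟩ := mem_iUnion₂.mp hz
  exact mem_iUnion.mpr ⟨k, hk⟩

/-- The length `l (h i (A ∩ I i))` of the paper. -/
noncomputable def len (i : ℕ) (A : Set X) : ℝ :=
  diam (sc.h i '' (A ∩ sc.I i))

theorem d_eq_tsum_len (x y : X) :
    sc.d x y = ∑' i : ℕ, (2 : ℝ)⁻¹ ^ (i + 1) * sc.len i (arcOf sc.huac x y) :=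
  rfl

theorem len_nonneg (i : ℕ) (A : Set X) : 0 ≤ sc.len i A :=
  diam_nonneg

theorem image_inter_subset_Icc (i : ℕ) (A : Set X) : sc.h i '' (A ∩ sc.I i) ⊆ Icc 0 1 :=
  sc.h_image i ▸ image_mono inter_subset_right

theorem len_mono (i : ℕ) {A B : Set X} (hAB : A ⊆ B) : sc.len i A ≤ sc.len i B :=
  diam_mono (image_mono (inter_subset_inter_left _ hAB))
    ((isBounded_Icc 0 1).subset (sc.image_inter_subset_Icc i B))

theorem len_le_one (i : ℕ) (A : Set X) : sc.len i A ≤ 1 := by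
  calc sc.len i A ≤ diam (Icc (0 : ℝ) 1) :=
        diam_mono (sc.image_inter_subset_Icc i A) (isBounded_Icc 0 1)
    _ = 1 := by simp [Real.diam_Icc]

theorem norm_summand_le (i : ℕ) (A : Set X) :
    ‖(2 : ℝ)⁻¹ ^ (i + 1) * sc.len i A‖ ≤ (2 : ℝ)⁻¹ ^ (i + 1) := by
  rw [norm_mul, norm_pow, norm_inv, Real.norm_two,
    Real.norm_of_nonneg (sc.len_nonneg i A)]
  exact mul_le_of_le_one_right (by positivity) (sc.len_le_one i A)

theorem summable_summand (A : Set X) :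
    Summable (fun i : ℕ => (2 : ℝ)⁻¹ ^ (i + 1) * sc.len i A) :=
  summable_geometric_two_inv_succ.of_norm_bounded (sc.norm_summand_le · A)

theorem d_le_d_of_arcOf_subset {p q a b : X} (hsub : arcOf sc.huac p q ⊆ arcOf sc.huac a b) :
    sc.d p q ≤ sc.d a b :=
  (sc.summable_summand _).tsum_le_tsum
    (fun i => mul_le_mul_of_nonneg_left (sc.len_mono i hsub) (by positivity))
    (sc.summable_summand _)

theorem isClosed_I (i : ℕ) : IsClosed (sc.I i) := by
  obtain ⟨-, -, f, hc, -, -, -, hr⟩ := sc.arc_I i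
  exact hr ▸ (isCompact_range hc).isClosed

section Arc

variable {f : unitInterval → X} (hc : Continuous f) (hi : Injective f)
include hc hi

theorem tendsto_len_arcOf (t₀ : unitInterval) (i : ℕ) :
    Tendsto (fun t => sc.len i (arcOf sc.huac (f t) (f t₀))) (𝓝 t₀) (𝓝 0) := by
  simp_rw [len, arcOf_eq_image_uIcc sc.huac hc hi, ← image_inter_preimage, image_image]
  exact tendsto_diam_image_uIcc_inter ((sc.h_cont i).comp hc.continuousOn (mapsTo_preimage _ _))
    ((sc.isClosed_I i).preimage hc) t₀

theorem tendsto_d_arcOf (t₀ : unitInterval) :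
    Tendsto (fun t => sc.d (f t) (f t₀)) (𝓝 t₀) (𝓝 0) := by
  simp only [d_eq_tsum_len]
  have h := tendsto_tsum_of_dominated_convergence (g := fun _ => 0)
    summable_geometric_two_inv_succ
    (fun i => by simpa using (sc.tendsto_len_arcOf hc hi t₀ i).const_mul ((2 : ℝ)⁻¹ ^ (i + 1)))
    (Eventually.of_forall fun t i => sc.norm_summand_le i (arcOf sc.huac (f t) (f t₀)))
  rwa [tsum_zero] at h

theorem continuous_comp_codRestrict {Y : Type*} [PseudoMetricSpace Y] (ι : sc.T → Y)
    (hiso : ∀ a b : sc.T, dist (ι a) (ι b) = sc.d a b) (hfT : ∀ t, f t ∈ sc.T) :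
    Continuous (ι ∘ codRestrict f sc.T hfT) :=
  continuous_iff_continuousAt.mpr fun t₀ => tendsto_iff_dist_tendsto_zero.mpr <| by
    simpa only [comp_apply, hiso, val_codRestrict_apply] using sc.tendsto_d_arcOf hc hi t₀

end Arc

variable {Y : Type*} [PseudoMetricSpace Y] (ι : sc.T → Y)
  (hiso : ∀ a b : sc.T, dist (ι a) (ι b) = sc.d a b)
include hiso

theorem isPreconnected_image_arcOf (a b : sc.T) :
    IsPreconnected (ι '' (Subtype.val ⁻¹' arcOf sc.huac a b)) := by
  rcases eq_or_ne (a : X) b with hab | hab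
  · rw [← hab, arcOf_self]
    exact ((subsingleton_singleton.preimage Subtype.val_injective).image ι).isPreconnected
  obtain ⟨f, hc, hi, -, -, hr⟩ := isArcBetween_arcOf sc.huac hab
  have hfT : ∀ t, f t ∈ sc.T := fun t => sc.arcOf_subset_T a.2 b.2 (hr ▸ mem_range_self t)
  rw [← hr, ← range_codRestrict hfT, ← range_comp]
  exact isPreconnected_range (sc.continuous_comp_codRestrict hc hi ι hiso hfT)

theorem isPreconnected_ball_inter_range (a : sc.T) (r : ℝ) :
    IsPreconnected (ball (ι a) r ∩ range ι) := by
  have hunion : ball (ι a) r ∩ range ι =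
      ⋃ b : ι ⁻¹' ball (ι a) r, ι '' (Subtype.val ⁻¹' arcOf sc.huac a b) := by
    refine Subset.antisymm ?_ (iUnion_subset fun b => ?_)
    · rintro _ ⟨hw, b, rfl⟩
      exact mem_iUnion.mpr ⟨⟨b, hw⟩, b, right_mem_arcOf sc.huac _ _, rfl⟩
    · rintro _ ⟨z, hz, rfl⟩
      refine ⟨?_, z, rfl⟩
      have hd : sc.d a z ≤ sc.d a b := sc.d_le_d_of_arcOf_subset (arcOf_subset_arcOf sc.huac hz)
      have hb : dist (ι a) (ι b) < r := mem_ball'.mp b.2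
      rw [mem_ball', hiso]
      rw [hiso] at hb
      linarith
  rw [hunion]
  exact isPreconnected_iUnion ⟨ι a, mem_iInter.mpr fun b => ⟨a, left_mem_arcOf sc.huac _ _, rfl⟩⟩
    fun b => sc.isPreconnected_image_arcOf ι hiso a b

end StandingConstruction

theorem locallyConnectedSpace_of_isPreconnected_ball_inter_range {α Y : Type*}
    [PseudoMetricSpace Y] {ι : α → Y} (hd : DenseRange ι)
    (h : ∀ a r, IsPreconnected (ball (ι a) r ∩ range ι)) : LocallyConnectedSpace Y := by
  rw [locallyConnectedSpace_iff_connected_subsets]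
  intro p U hU
  obtain ⟨ε, hε, hball⟩ := Metric.mem_nhds_iff.mp hU
  obtain ⟨a, ha⟩ := hd.exists_dist_lt p (by positivity : (0 : ℝ) < ε / 3)
  have hpa : p ∈ ball (ι a) (ε / 3) := mem_ball.mpr ha
  refine ⟨closure (ball (ι a) (ε / 3) ∩ range ι), ?_, (h a _).closure, ?_⟩
  · exact mem_of_superset (isOpen_ball.mem_nhds hpa) (hd.open_subset_closure_inter isOpen_ball)
  · calc closure (ball (ι a) (ε / 3) ∩ range ι) ⊆ closedBall (ι a) (ε / 3) :=
          closure_minimal (inter_subset_left.trans ball_subset_closedBall) isClosed_closedBall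
      _ ⊆ ball p ε := closedBall_subset_ball' (by rw [dist_comm]; linarith)
      _ ⊆ U := hball

theorem sc_completion_locallyConnected_general
    {X Y : Type*} [MetricSpace X]
    [MetricSpace Y]
    (sc : StandingConstruction X) (ι : sc.T → Y)
    (hiso : ∀ a b : sc.T, dist (ι a) (ι b) = sc.d a b)
    (hdense : DenseRange ι) :
    LocallyConnectedSpace Y :=
  locallyConnectedSpace_of_isPreconnected_ball_inter_range hdense
    (sc.isPreconnected_ball_inter_range ι hiso)

/-- **Claim B of Proposition 3.1.** The metric completion `(T̄, d)` of `(T, d)` from the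
standing construction is locally connected. Here the completion is formalized as a
complete metric space `Y` together with a map `ι : T → Y` which is isometric for `d`
and has dense range. -/
theorem sc_completion_locallyConnected
    {X Y : Type*} [MetricSpace X] [CompactSpace X] [ConnectedSpace X] [Nonempty X]
    [MetricSpace Y] [CompleteSpace Y]
    (sc : StandingConstruction X) (ι : sc.T → Y)
    (hiso : ∀ a b : sc.T, dist (ι a) (ι b) = sc.d a b)
    (hdense : DenseRange ι) :
    LocallyConnectedSpace Y :=
  sc_completion_locallyConnected_general sc ι hiso hdense
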